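/- Minimax guarantee for the TV-critic game, population minimizer: Let P be the true kernel and P̂* a candidate kernel on the same finite MDP (reward r with 0 ≤ r ≤ R_max, discount γ ∈ (0,1), initial distribution ρ₀), let Π be a nonempty set of stationary policies, and let d_data be a probability mass function on S × A satisfying κ-coverage for Π under P. Let 𝒟 be a nonempty set of functions D : S × A × S → [−1,1] and let ε_critic ≥ 0 satisfy, for every (s,a), 2·TV(P(·|s,a), P̂*(·|s,a)) ≤ sup_{D∈𝒟} Δ_{D,P̂*}(s,a) + ε_critic. If Σ_{(s,a)} d_data(s,a)·sup_{D∈𝒟} Δ_{D,P̂*}(s,a) ≤ ε_model, then for every π ∈ Π, |V_π(P) − V_π(P̂*)| ≤ (γ·R_max/(1−γ)) · κ · ( ε_model/2 + ε_critic/2 ). -/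

import Mathlib

open Finset Real

/-- `p` is a probability mass function on a finite type. -/
def IsPMF {X : Type*} [Fintype X] (p : X → ℝ) : Prop :=
  (∀ x, 0 ≤ p x) ∧ ∑ x, p x = 1

/-- `P` is a transition kernel: each `P s a` is a pmf on states. -/
def IsKernel {S A : Type*} [Fintype S] [Fintype A] (P : S → A → S → ℝ) : Prop :=
  ∀ s a, IsPMF (P s a)

/-- `pol` is a stationary policy: each `pol s` is a pmf on actions. -/
def IsPolicy {S A : Type*} [Fintype S] [Fintype A] (pol : S → A → ℝ) : Prop :=
  ∀ s, IsPMF (pol s)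

/-- `V` satisfies the Bellman evaluation equation for policy `pol` under kernel `P`,
reward `r` and discount `γ`. -/
def IsValue {S A : Type*} [Fintype S] [Fintype A] (P : S → A → S → ℝ) (pol : S → A → ℝ)
    (r : S → A → ℝ) (γ : ℝ) (V : S → ℝ) : Prop :=
  ∀ s, V s = ∑ a, pol s a * (r s a + γ * ∑ s', P s a s' * V s')

/-- `d` is the (unnormalized) discounted state-action occupancy of `pol` under kernel `P`
with initial distribution `ρ₀` and discount `γ`. -/
def IsOcc {S A : Type*} [Fintype S] [Fintype A] (P : S → A → S → ℝ) (pol : S → A → ℝ)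
    (ρ₀ : S → ℝ) (γ : ℝ) (d : S → A → ℝ) : Prop :=
  ∀ s a, d s a = pol s a * (ρ₀ s + γ * ∑ x : S × A, d x.1 x.2 * P x.1 x.2 s)

/-- ℓ₁ distance between two pmfs on a finite type. -/
noncomputable def l1Dist {X : Type*} [Fintype X] (p q : X → ℝ) : ℝ :=
  ∑ x, |p x - q x|

/-- Total variation distance between two pmfs on a finite type. -/
noncomputable def tvDist {X : Type*} [Fintype X] (p q : X → ℝ) : ℝ :=
  (1 / 2) * ∑ x, |p x - q x|

/-- Kullback-Leibler divergence between two pmfs on a finite type (finite under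
absolute continuity). -/
noncomputable def klF {X : Type*} [Fintype X] (p q : X → ℝ) : ℝ :=
  ∑ x, p x * Real.log (p x / q x)

/-- `d_data` satisfies κ-coverage for the policy set `Pol` under kernel `P`:
every occupancy of a policy in `Pol` is dominated by `κ · d_data`. -/
def KappaCoverage {S A : Type*} [Fintype S] [Fintype A] (P : S → A → S → ℝ) (ρ₀ : S → ℝ)
    (γ : ℝ) (Pol : Set (S → A → ℝ)) (ddata : S → A → ℝ) (κ : ℝ) : Prop :=
  ∀ pol ∈ Pol, ∀ dpol : S → A → ℝ, IsOcc P pol ρ₀ γ dpol → ∀ s a, dpol s a ≤ κ * ddata s a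

/-- Critic discrepancy `Δ_{D,P̂}(s,a)`. -/
noncomputable def critDelta {S A : Type*} [Fintype S] (P Phat : S → A → S → ℝ)
    (D : S → A → S → ℝ) (s : S) (a : A) : ℝ :=
  (∑ s', P s a s' * D s a s') - ∑ s', Phat s a s' * D s a s'

/-- Supremum over the critic class of the critic discrepancy at `(s,a)`. -/
noncomputable def critSup {S A : Type*} [Fintype S] (𝒟 : Set (S → A → S → ℝ))
    (P Phat : S → A → S → ℝ) (s : S) (a : A) : ℝ :=
  sSup {y | ∃ D ∈ 𝒟, y = critDelta P Phat D s a}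

/-!
`V - V̂` is the value of `π` under `P` for the reward `γ (P - P̂) V̂`, so pairing the Bellman
equation with the occupancy `d_π` of `π` under `P` gives `ρ₀ · (V - V̂) = ⟨d_π, γ (P - P̂) V̂⟩`
(simulation lemma). As `V̂` takes values in `[0, R_max/(1-γ)]`, each term is at most
`γ R_max/(1-γ) · TV(P, P̂)`. Coverage replaces `d_π` by `κ d_data`, and averaging
`2 TV ≤ sup_D Δ_D + ε_critic` against `d_data` bounds `⟨d_data, TV⟩` by `ε_model/2 + ε_critic/2`.
The occupancy exists and is nonnegative because its defining operator has total mass `γ < 1`.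
-/

theorem IsPMF.sum_mul_le {X : Type*} [Fintype X] {p f : X → ℝ} {c : ℝ} (hp : IsPMF p)
    (hf : ∀ x, f x ≤ c) : ∑ x, p x * f x ≤ c :=
  calc ∑ x, p x * f x ≤ ∑ x, p x * c :=
        sum_le_sum fun x _ => mul_le_mul_of_nonneg_left (hf x) (hp.1 x)
    _ = c := by rw [← sum_mul, hp.2, one_mul]

theorem tvDist_nonneg {X : Type*} [Fintype X] (p q : X → ℝ) : 0 ≤ tvDist p q := by
  unfold tvDist; positivity

theorem abs_sum_mul_sub_sum_mul_le {X : Type*} [Fintype X] {p q f : X → ℝ} {lo hi : ℝ}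
    (hpq : ∑ x, p x = ∑ x, q x) (hf : ∀ x, f x ∈ Set.Icc lo hi) :
    |∑ x, p x * f x - ∑ x, q x * f x| ≤ (hi - lo) * tvDist p q := by
  set m := (lo + hi) / 2 with hm
  -- centring `f` at the midpoint of `[lo, hi]` costs nothing since `p` and `q` have equal mass
  have hcentre : ∑ x, p x * f x - ∑ x, q x * f x = ∑ x, (p x - q x) * (f x - m) := by
    simp only [sub_mul, mul_sub, sum_sub_distrib, ← sum_mul, hpq]
    ring
  rw [hcentre, tvDist, ← mul_assoc, mul_sum]
  refine (abs_sum_le_sum_abs _ _).trans (sum_le_sum fun x _ => ?_)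
  rw [abs_mul, mul_comm]
  refine mul_le_mul_of_nonneg_right ?_ (abs_nonneg _)
  obtain ⟨hlo, hhi⟩ := hf x
  rw [abs_le]
  constructor <;> linarith

section Value

variable {S A : Type*} [Fintype S] [Fintype A] {P : S → A → S → ℝ} {pol : S → A → ℝ}
  {r : S → A → ℝ} {γ : ℝ} {V : S → ℝ}

theorem IsValue.neg (hV : IsValue P pol r γ V) : IsValue P pol (-r) γ (-V) := by
  intro s
  rw [Pi.neg_apply, hV s, ← sum_neg_distrib]
  refine sum_congr rfl fun a _ => ?_
  simp only [Pi.neg_apply, mul_neg, sum_neg_distrib]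
  ring

theorem IsValue.le_div_one_sub_of_le [Nonempty S] (hV : IsValue P pol r γ V) (hP : IsKernel P)
    (hpol : IsPolicy pol) {R : ℝ} (hr : ∀ s a, r s a ≤ R) (hγ0 : 0 ≤ γ) (hγ1 : γ < 1) (s : S) :
    V s ≤ R / (1 - γ) := by
  obtain ⟨s₀, -, hs₀⟩ := exists_max_image univ V univ_nonempty
  have hmax : ∀ s, V s ≤ V s₀ := fun s => hs₀ s (mem_univ s)
  have hstep : V s₀ ≤ R + γ * V s₀ := by
    refine (hV s₀).trans_le ?_
    refine (hpol s₀).sum_mul_le fun a => add_le_add (hr s₀ a) ?_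
    exact mul_le_mul_of_nonneg_left ((hP s₀ a).sum_mul_le hmax) hγ0
  rw [le_div_iff₀ (by linarith)]
  nlinarith [hmax s]

theorem IsValue.mem_Icc [Nonempty S] (hV : IsValue P pol r γ V) (hP : IsKernel P)
    (hpol : IsPolicy pol) {R : ℝ} (hr : ∀ s a, 0 ≤ r s a ∧ r s a ≤ R) (hγ0 : 0 ≤ γ)
    (hγ1 : γ < 1) (s : S) : V s ∈ Set.Icc 0 (R / (1 - γ)) := by
  have hlo := hV.neg.le_div_one_sub_of_le hP hpol (R := 0) (fun s a => neg_nonpos.2 (hr s a).1) hγ0 hγ1 s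
  simp only [zero_div, Pi.neg_apply, neg_nonpos] at hlo
  exact ⟨hlo, hV.le_div_one_sub_of_le hP hpol (fun s a => (hr s a).2) hγ0 hγ1 s⟩

end Value

section Occupancy

variable {S A : Type*} [Fintype S] [Fintype A] {P : S → A → S → ℝ} {pol : S → A → ℝ} {γ : ℝ}

variable (P pol γ) in
/-- `IsOcc P pol ρ₀ γ d` says `d = pol ⊙ ρ₀ + occupancyOp P pol γ d` on `S × A`. -/
noncomputable def occupancyOp : (S × A → ℝ) →ₗ[ℝ] (S × A → ℝ) where
  toFun u y := pol y.1 y.2 * (γ * ∑ x, u x * P x.1 x.2 y.1)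
  map_add' u v := by
    ext y
    simp only [Pi.add_apply, add_mul, sum_add_distrib]
    ring
  map_smul' c u := by
    ext y
    simp only [Pi.smul_apply, smul_eq_mul, RingHom.id_apply, mul_assoc, ← mul_sum]
    ring

theorem occupancyOp_apply (u : S × A → ℝ) (y : S × A) :
    occupancyOp P pol γ u y = pol y.1 y.2 * (γ * ∑ x, u x * P x.1 x.2 y.1) := rfl

theorem sum_occupancyOp (hP : IsKernel P) (hpol : IsPolicy pol) (u : S × A → ℝ) :
    ∑ y, occupancyOp P pol γ u y = γ * ∑ x, u x := by
  simp only [occupancyOp_apply]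
  rw [Fintype.sum_prod_type]
  simp only [← sum_mul, (hpol _).2, one_mul, ← mul_sum]
  rw [sum_comm]
  simp only [← mul_sum, (hP _ _).2, mul_one]

theorem occupancyOp_mono (hP : IsKernel P) (hpol : IsPolicy pol) (hγ0 : 0 ≤ γ) :
    Monotone (occupancyOp P pol γ) := fun _ _ huv y =>
  mul_le_mul_of_nonneg_left (mul_le_mul_of_nonneg_left
    (sum_le_sum fun x _ => mul_le_mul_of_nonneg_right (huv x) ((hP x.1 x.2).1 y.1)) hγ0)
    ((hpol y.1).1 y.2)

-- `occupancyOp` scales total mass by `γ < 1`, so `f ≤ occupancyOp f` forces mass `0`.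
theorem eq_zero_of_le_occupancyOp (hP : IsKernel P) (hpol : IsPolicy pol) (hγ1 : γ < 1)
    {f : S × A → ℝ} (hf0 : 0 ≤ f) (hf : f ≤ occupancyOp P pol γ f) : f = 0 := by
  have hmass : ∑ y, f y ≤ γ * ∑ y, f y :=
    (sum_le_sum fun y _ => hf y).trans_eq (sum_occupancyOp hP hpol f)
  have hmass0 : ∑ y, f y = 0 := by nlinarith [sum_nonneg fun y (_ : y ∈ univ) => hf0 y]
  exact (Fintype.sum_eq_zero_iff_of_nonneg hf0).1 hmass0

theorem injective_id_sub_occupancyOp (hP : IsKernel P) (hpol : IsPolicy pol) (hγ0 : 0 ≤ γ)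
    (hγ1 : γ < 1) : Function.Injective
      (LinearMap.id - occupancyOp P pol γ : (S × A → ℝ) →ₗ[ℝ] (S × A → ℝ)) := by
  rw [← LinearMap.ker_eq_bot, LinearMap.ker_eq_bot']
  intro u hu
  have hfix : occupancyOp P pol γ u = u := (sub_eq_zero.1 hu).symm
  have hmono := occupancyOp_mono hP hpol hγ0
  have habs : |u| ≤ occupancyOp P pol γ |u| := by
    refine abs_le'.2 ⟨?_, ?_⟩
    · calc u = occupancyOp P pol γ u := hfix.symm
        _ ≤ occupancyOp P pol γ |u| := hmono (le_abs_self u)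
    · calc -u = occupancyOp P pol γ (-u) := by rw [map_neg, hfix]
        _ ≤ occupancyOp P pol γ |u| := hmono (neg_le_abs u)
  exact Pi.abs_eq_zero _ |>.1 (eq_zero_of_le_occupancyOp hP hpol hγ1 (abs_nonneg u) habs)

theorem exists_isOcc_nonneg (hP : IsKernel P) (hpol : IsPolicy pol) {ρ₀ : S → ℝ}
    (hρ : ∀ s, 0 ≤ ρ₀ s) (hγ0 : 0 ≤ γ) (hγ1 : γ < 1) :
    ∃ d : S → A → ℝ, IsOcc P pol ρ₀ γ d ∧ ∀ s a, 0 ≤ d s a := by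
  set T := occupancyOp P pol γ
  set b : S × A → ℝ := fun y => pol y.1 y.2 * ρ₀ y.1
  obtain ⟨u, hu⟩ := LinearMap.injective_iff_surjective.1
    (injective_id_sub_occupancyOp hP hpol hγ0 hγ1) b
  have hub : u = b + T u := by rw [← hu, LinearMap.sub_apply, LinearMap.id_apply, sub_add_cancel]
  -- the negative part of `u` is a subsolution, as `b ≥ 0` and `T` is monotone
  have hnegPart : -u ⊔ 0 ≤ T (-u ⊔ 0) := by
    have hmono := occupancyOp_mono hP hpol hγ0
    refine sup_le ?_ (by simpa using hmono (le_sup_right : (0 : S × A → ℝ) ≤ -u ⊔ 0))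
    have hb : 0 ≤ b := fun y => mul_nonneg ((hpol y.1).1 y.2) (hρ y.1)
    calc -u = -b + T (-u) := by rw [map_neg, ← neg_add, ← hub]
      _ ≤ 0 + T (-u) := add_le_add_left (neg_nonpos.2 hb) _
      _ = T (-u) := zero_add _
      _ ≤ T (-u ⊔ 0) := hmono le_sup_left
  have hu0 := eq_zero_of_le_occupancyOp hP hpol hγ1 le_sup_right hnegPart
  refine ⟨fun s a => u (s, a), fun s a => ?_, fun s a => ?_⟩
  · have := congrFun hub (s, a)
    simp only [Pi.add_apply, occupancyOp_apply, T, b] at this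
    change u (s, a) = _
    rw [this]; ring
  · simpa using congrFun hu0 (s, a)

end Occupancy

section Simulation

variable {S A : Type*} [Fintype S] [Fintype A] {P Phat : S → A → S → ℝ} {pol : S → A → ℝ}
  {r : S → A → ℝ} {γ : ℝ} {V Vhat : S → ℝ}

theorem IsValue.sub (hV : IsValue P pol r γ V) (hVhat : IsValue Phat pol r γ Vhat) :
    IsValue P pol (fun s a => γ * (∑ s', P s a s' * Vhat s' - ∑ s', Phat s a s' * Vhat s')) γ
      (V - Vhat) := by
  intro s
  rw [Pi.sub_apply, hV s, hVhat s, ← sum_sub_distrib]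
  refine sum_congr rfl fun a _ => ?_
  simp only [Pi.sub_apply, mul_sub, sum_sub_distrib]
  ring

-- Pair the occupancy equation with `w` and the Bellman equation with `d`; the `γ`-terms cancel.
theorem IsOcc.sum_mul_eq_of_isValue {ρ₀ : S → ℝ} {d g : S → A → ℝ} {w : S → ℝ}
    (hd : IsOcc P pol ρ₀ γ d) (hw : IsValue P pol g γ w) :
    ∑ s, ρ₀ s * w s = ∑ x : S × A, d x.1 x.2 * g x.1 x.2 := by
  set ν : S → ℝ := fun s => ∑ x : S × A, d x.1 x.2 * P x.1 x.2 s
  set pair := ∑ x : S × A, d x.1 x.2 * (g x.1 x.2 + γ * ∑ s', P x.1 x.2 s' * w s')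
  have hpair_occ : pair = ∑ s, (ρ₀ s + γ * ν s) * w s := by
    simp only [pair, Fintype.sum_prod_type]
    refine sum_congr rfl fun s _ => ?_
    rw [hw s, mul_sum]
    exact sum_congr rfl fun a _ => by rw [hd s a]; ring
  have hpair_val : pair = ∑ x : S × A, d x.1 x.2 * g x.1 x.2 + γ * ∑ s, ν s * w s := by
    simp only [pair, ν, mul_add, sum_add_distrib, mul_sum, sum_mul]
    rw [sum_comm]
    congr 1
    exact sum_congr rfl fun s _ => sum_congr rfl fun x _ => by ring
  have hsplit : ∑ s, (ρ₀ s + γ * ν s) * w s = ∑ s, ρ₀ s * w s + γ * ∑ s, ν s * w s := by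
    rw [mul_sum, ← sum_add_distrib]
    exact sum_congr rfl fun s _ => by ring
  linarith

theorem abs_sum_value_sub_le [Nonempty S] (hP : IsKernel P) (hPhat : IsKernel Phat)
    (hpol : IsPolicy pol) {Rmax : ℝ} (hr : ∀ s a, 0 ≤ r s a ∧ r s a ≤ Rmax) (hγ0 : 0 ≤ γ)
    (hγ1 : γ < 1) (hV : IsValue P pol r γ V) (hVhat : IsValue Phat pol r γ Vhat)
    {ρ₀ : S → ℝ} {d : S → A → ℝ} (hd : IsOcc P pol ρ₀ γ d) (hd0 : ∀ s a, 0 ≤ d s a) :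
    |∑ s, ρ₀ s * V s - ∑ s, ρ₀ s * Vhat s| ≤
      γ * (Rmax / (1 - γ)) * ∑ x : S × A, d x.1 x.2 * tvDist (P x.1 x.2) (Phat x.1 x.2) := by
  have hVhat_mem := hVhat.mem_Icc hPhat hpol hr hγ0 hγ1
  have hgap : ∀ s a, |γ * (∑ s', P s a s' * Vhat s' - ∑ s', Phat s a s' * Vhat s')| ≤
      γ * (Rmax / (1 - γ)) * tvDist (P s a) (Phat s a) := fun s a => by
    rw [abs_mul, abs_of_nonneg hγ0, mul_assoc]
    have hmass : ∑ s', P s a s' = ∑ s', Phat s a s' := by rw [(hP s a).2, (hPhat s a).2]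
    have := abs_sum_mul_sub_sum_mul_le hmass hVhat_mem
    rw [sub_zero] at this
    exact mul_le_mul_of_nonneg_left this hγ0
  have hsim : ∑ s, ρ₀ s * V s - ∑ s, ρ₀ s * Vhat s = ∑ x : S × A, d x.1 x.2 *
      (γ * (∑ s', P x.1 x.2 s' * Vhat s' - ∑ s', Phat x.1 x.2 s' * Vhat s')) := by
    rw [← sum_sub_distrib, ← hd.sum_mul_eq_of_isValue (hV.sub hVhat)]
    simp only [Pi.sub_apply, mul_sub]
  rw [hsim, mul_sum]
  refine (abs_sum_le_sum_abs _ _).trans (sum_le_sum fun x _ => ?_)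
  rw [abs_mul, abs_of_nonneg (hd0 _ _), mul_left_comm]
  exact mul_le_mul_of_nonneg_left (hgap _ _) (hd0 _ _)

end Simulation

theorem sum_mul_tvDist_le_of_critic {S A : Type*} [Fintype S] [Fintype A]
    {P Phat : S → A → S → ℝ} {ddata : S → A → ℝ} (hdata : IsPMF (fun x : S × A => ddata x.1 x.2))
    {𝒟 : Set (S → A → S → ℝ)} {εc εm : ℝ}
    (hcritic : ∀ s a, 2 * tvDist (P s a) (Phat s a) ≤ critSup 𝒟 P Phat s a + εc)
    (hmodel : ∑ x : S × A, ddata x.1 x.2 * critSup 𝒟 P Phat x.1 x.2 ≤ εm) :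
    ∑ x : S × A, ddata x.1 x.2 * tvDist (P x.1 x.2) (Phat x.1 x.2) ≤ εm / 2 + εc / 2 :=
  calc ∑ x : S × A, ddata x.1 x.2 * tvDist (P x.1 x.2) (Phat x.1 x.2)
      ≤ ∑ x : S × A, ddata x.1 x.2 * ((critSup 𝒟 P Phat x.1 x.2 + εc) / 2) :=
        sum_le_sum fun x _ => mul_le_mul_of_nonneg_left (by linarith [hcritic x.1 x.2]) (hdata.1 x)
    _ = (∑ x : S × A, ddata x.1 x.2 * critSup 𝒟 P Phat x.1 x.2) / 2
          + εc / 2 * ∑ x : S × A, ddata x.1 x.2 := by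
        rw [sum_div, mul_sum, ← sum_add_distrib]
        exact sum_congr rfl fun x _ => by ring
    _ ≤ εm / 2 + εc / 2 := by rw [hdata.2]; linarith

theorem tv_critic_population_minimizer_general
    {S A : Type*} [Fintype S] [Fintype A] [Nonempty S] [Nonempty A]
    (P Phat : S → A → S → ℝ) (hP : IsKernel P) (hPhat : IsKernel Phat)
    (r : S → A → ℝ) (Rmax : ℝ) (hr : ∀ s a, 0 ≤ r s a ∧ r s a ≤ Rmax)
    (γ : ℝ) (hγ0 : 0 < γ) (hγ1 : γ < 1)
    (ρ₀ : S → ℝ) (hρ : IsPMF ρ₀)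
    (Pol : Set (S → A → ℝ)) (hPol : ∀ p ∈ Pol, IsPolicy p)
    (ddata : S → A → ℝ) (hdata : IsPMF (fun x : S × A => ddata x.1 x.2))
    (κ : ℝ) (hκ : 0 < κ)
    (hcov : KappaCoverage P ρ₀ γ Pol ddata κ)
    (𝒟 : Set (S → A → S → ℝ))
    (εc : ℝ)
    (hcritic : ∀ s a, 2 * tvDist (P s a) (Phat s a) ≤ critSup 𝒟 P Phat s a + εc)
    (εm : ℝ)
    (hmodel : ∑ x : S × A, ddata x.1 x.2 * critSup 𝒟 P Phat x.1 x.2 ≤ εm) :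
    ∀ p ∈ Pol, ∀ V Vhat : S → ℝ, IsValue P p r γ V → IsValue Phat p r γ Vhat →
      |(∑ s, ρ₀ s * V s) - ∑ s, ρ₀ s * Vhat s| ≤
        γ * Rmax / (1 - γ) * κ * (εm / 2 + εc / 2) := by
  intro p hp V Vhat hV hVhat
  have hRmax : 0 ≤ Rmax :=
    (hr (Classical.arbitrary S) (Classical.arbitrary A)).1.trans (hr _ _).2
  obtain ⟨d, hd, hd0⟩ := exists_isOcc_nonneg hP (hPol p hp) hρ.1 hγ0.le hγ1
  have hcovered : ∑ x : S × A, d x.1 x.2 * tvDist (P x.1 x.2) (Phat x.1 x.2) ≤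
      κ * ∑ x : S × A, ddata x.1 x.2 * tvDist (P x.1 x.2) (Phat x.1 x.2) := by
    rw [mul_sum]
    refine sum_le_sum fun x _ => ?_
    rw [← mul_assoc]
    exact mul_le_mul_of_nonneg_right (hcov p hp d hd _ _) (tvDist_nonneg _ _)
  calc |(∑ s, ρ₀ s * V s) - ∑ s, ρ₀ s * Vhat s|
      ≤ γ * (Rmax / (1 - γ)) * ∑ x : S × A, d x.1 x.2 * tvDist (P x.1 x.2) (Phat x.1 x.2) :=
        abs_sum_value_sub_le hP hPhat (hPol p hp) hr hγ0.le hγ1 hV hVhat hd hd0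
    _ ≤ γ * (Rmax / (1 - γ)) * (κ * (εm / 2 + εc / 2)) := by
        refine mul_le_mul_of_nonneg_left (hcovered.trans ?_)
          (mul_nonneg hγ0.le (div_nonneg hRmax (sub_nonneg.2 hγ1.le)))
        exact mul_le_mul_of_nonneg_left (sum_mul_tvDist_le_of_critic hdata hcritic hmodel) hκ.le
    _ = γ * Rmax / (1 - γ) * κ * (εm / 2 + εc / 2) := by ring

/-- **Minimax guarantee for the TV-critic game (population minimizer).** If the
TV-critic game value of `Phat` is at most `εm` and the critic class approximates the
`L∞` ball up to `εc`, then under κ-coverage the value gap of every policy in `Pol` is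
bounded by `(γ Rmax/(1-γ)) κ (εm/2 + εc/2)`. -/
theorem tv_critic_population_minimizer
    {S A : Type*} [Fintype S] [Fintype A] [Nonempty S] [Nonempty A]
    (P Phat : S → A → S → ℝ) (hP : IsKernel P) (hPhat : IsKernel Phat)
    (r : S → A → ℝ) (Rmax : ℝ) (hr : ∀ s a, 0 ≤ r s a ∧ r s a ≤ Rmax)
    (γ : ℝ) (hγ0 : 0 < γ) (hγ1 : γ < 1)
    (ρ₀ : S → ℝ) (hρ : IsPMF ρ₀)
    (Pol : Set (S → A → ℝ)) (hPolNe : Pol.Nonempty) (hPol : ∀ p ∈ Pol, IsPolicy p)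
    (ddata : S → A → ℝ) (hdata : IsPMF (fun x : S × A => ddata x.1 x.2))
    (κ : ℝ) (hκ : 0 < κ)
    (hcov : KappaCoverage P ρ₀ γ Pol ddata κ)
    (𝒟 : Set (S → A → S → ℝ)) (h𝒟ne : 𝒟.Nonempty)
    (h𝒟bdd : ∀ D ∈ 𝒟, ∀ s a s', D s a s' ∈ Set.Icc (-1 : ℝ) 1)
    (εc : ℝ) (hεc : 0 ≤ εc)
    (hcritic : ∀ s a, 2 * tvDist (P s a) (Phat s a) ≤ critSup 𝒟 P Phat s a + εc)
    (εm : ℝ)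
    (hmodel : ∑ x : S × A, ddata x.1 x.2 * critSup 𝒟 P Phat x.1 x.2 ≤ εm) :
    ∀ p ∈ Pol, ∀ V Vhat : S → ℝ, IsValue P p r γ V → IsValue Phat p r γ Vhat →
      |(∑ s, ρ₀ s * V s) - ∑ s, ρ₀ s * Vhat s| ≤
        γ * Rmax / (1 - γ) * κ * (εm / 2 + εc / 2) :=
  tv_critic_population_minimizer_general P Phat hP hPhat r Rmax hr γ hγ0 hγ1 ρ₀ hρ Pol hPol ddata
    hdata κ hκ hcov 𝒟 εc hcritic εm hmodel
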